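/- If B ∈ Γ(P,X) (i.e., B is a connected component of st(A) for some non-empty A ⊆ X), then I_X(B) = {x ∈ X | B ⊆ st(x)} is non-empty and B is a connected component of st(I_X(B)). -/

import Mathlib

/-- The star of an element: all elements comparable to `a`. -/
def starOf {α : Type*} [PartialOrder α] (a : α) : Set α := {x | x ≤ a ∨ a ≤ x}

/-- The star of a subset: elements comparable to every element of `A`. -/
def starSetOf {α : Type*} [PartialOrder α] (A : Set α) : Set α := ⋂ a ∈ A, starOf a

/-- A subset is astral if it is contained in the star of some element. -/
def IsAstral {α : Type*} [PartialOrder α] (A : Set α) : Prop := ∃ x : α, A ⊆ starOf x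

/-- One step of the comparability relation inside a subposet `S`. -/
def CompStep {α : Type*} [PartialOrder α] (S : Set α) (x y : α) : Prop :=
  x ∈ S ∧ y ∈ S ∧ (x ≤ y ∨ y ≤ x)

/-- `x` and `y` are connected inside the subposet `S`. -/
def ConnIn {α : Type*} [PartialOrder α] (S : Set α) (x y : α) : Prop :=
  Relation.ReflTransGen (CompStep S) x y

/-- A subposet is connected (as a subposet, via comparability). -/
def IsConnSub {α : Type*} [PartialOrder α] (S : Set α) : Prop :=
  S.Nonempty ∧ ∀ x ∈ S, ∀ y ∈ S, ConnIn S x y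

/-- The connected component of `x` in the subposet `S`. -/
def compOf {α : Type*} [PartialOrder α] (S : Set α) (x : α) : Set α :=
  {y | y ∈ S ∧ ConnIn S x y}

/-- `C` is a connected component of the subposet `S`. -/
def IsCompOf {α : Type*} [PartialOrder α] (S C : Set α) : Prop :=
  ∃ x ∈ S, C = compOf S x

/-- The crosscut poset `Γ(P,X)`: connected components of the nonempty `st(A)`, `∅ ≠ A ⊆ X`. -/
def crosscutPoset {α : Type*} [PartialOrder α] (X : Set α) : Set (Set α) :=
  {C | ∃ A : Set α, A.Nonempty ∧ A ⊆ X ∧ IsCompOf (starSetOf A) C}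

/-- The subposet `Γ_f(P,X)` coming from finite subsets `A ⊆ X`. -/
def crosscutPosetF {α : Type*} [PartialOrder α] (X : Set α) : Set (Set α) :=
  {C | ∃ A : Set α, A.Nonempty ∧ A.Finite ∧ A ⊆ X ∧ IsCompOf (starSetOf A) C}

/-- `X` is a cutset: every finite chain extends to a chain by an element of `X`. -/
def IsCutset {α : Type*} [PartialOrder α] (X : Set α) : Prop :=
  ∀ σ : Set α, σ.Finite → IsChain (· ≤ ·) σ → ∃ a ∈ X, IsChain (· ≤ ·) (insert a σ)

/-- A subset `X` is coherent: every finite nonempty bounded subset of `X` has a meet or a join. -/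
def IsCoherent {α : Type*} [PartialOrder α] (X : Set α) : Prop :=
  ∀ A ⊆ X, A.Finite → A.Nonempty → (BddAbove A ∨ BddBelow A) →
    (∃ z, IsGLB A z) ∨ (∃ z, IsLUB A z)

/-- The simplices of the crosscut complex `Γ_C(P,X)`: nonempty finite astral subsets of `X`. -/
def IsCCSimplex {α : Type*} [PartialOrder α] (X σ : Set α) : Prop :=
  σ ⊆ X ∧ σ.Finite ∧ σ.Nonempty ∧ IsAstral σ

/-- `I_X(D) = {x ∈ X | D ⊆ st(x)}`. -/
def astralIdx {α : Type*} [PartialOrder α] (X D : Set α) : Set α :=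
  {x ∈ X | D ⊆ starOf x}

/-- The set of maximal elements of a poset. -/
def mxlSet (α : Type*) [PartialOrder α] : Set α := {a | ∀ b, a ≤ b → b = a}

/-- The set of minimal elements of a poset. -/
def mnlSet (α : Type*) [PartialOrder α] : Set α := {a | ∀ b, b ≤ a → b = a}

/-- Type synonym carrying the Alexandroff topology (down-sets are open) of a preorder. -/
def AlexSp (β : Type*) := β

instance {β : Type*} [Preorder β] : Preorder (AlexSp β) := inferInstanceAs (Preorder β)
instance {β : Type*} [PartialOrder β] : PartialOrder (AlexSp β) :=
  inferInstanceAs (PartialOrder β)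

instance {β : Type*} [Preorder β] : TopologicalSpace (AlexSp β) where
  IsOpen U := IsLowerSet U
  isOpen_univ := isLowerSet_univ
  isOpen_inter _ _ h₁ h₂ := h₁.inter h₂
  isOpen_sUnion _ h := isLowerSet_sUnion h

/-!
If `B` is a component of `st(A)` with `∅ ≠ A ⊆ X`, then `A ⊆ I_X(B)`, so
`B ⊆ st(I_X(B)) ⊆ st(A)`. A component of a subposet stays a component of any intermediate
subposet containing it: paths from its base point never leave it.
-/

section Star

variable {α : Type*} [PartialOrder α]

theorem mem_starSetOf {A : Set α} {x : α} : x ∈ starSetOf A ↔ ∀ a ∈ A, x ∈ starOf a := by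
  simp only [starSetOf, Set.mem_iInter]

theorem starSetOf_anti {A A' : Set α} (h : A ⊆ A') : starSetOf A' ⊆ starSetOf A :=
  fun _ hx => mem_starSetOf.2 fun a ha => mem_starSetOf.1 hx a (h ha)

theorem subset_starSetOf_astralIdx (X D : Set α) : D ⊆ starSetOf (astralIdx X D) :=
  fun _ hd => mem_starSetOf.2 fun _ hx => hx.2 hd

theorem subset_astralIdx {X A D : Set α} (hAX : A ⊆ X) (hD : D ⊆ starSetOf A) :
    A ⊆ astralIdx X D :=
  fun a ha => ⟨hAX ha, fun _ hd => mem_starSetOf.1 (hD hd) a ha⟩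

end Star

section Components

variable {α : Type*} [PartialOrder α] {S T C : Set α} {x y : α}

theorem ConnIn.mono (hST : S ⊆ T) (h : ConnIn S x y) : ConnIn T x y :=
  Relation.ReflTransGen.mono (fun _ _ hs => ⟨hST hs.1, hST hs.2.1, hs.2.2⟩) _ _ h

theorem ConnIn.compOf (h : ConnIn S x y) : ConnIn (compOf S x) x y := by
  induction h with
  | refl => exact .refl
  | @tail y z hxy step ih =>
    exact ih.tail ⟨⟨step.1, hxy⟩, ⟨step.2.1, hxy.tail step⟩, step.2.2⟩

theorem IsCompOf.subset (h : IsCompOf S C) : C ⊆ S := by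
  obtain ⟨x, -, rfl⟩ := h
  exact fun _ hy => hy.1

theorem IsCompOf.of_subset (h : IsCompOf S C) (hCT : C ⊆ T) (hTS : T ⊆ S) :
    IsCompOf T C := by
  obtain ⟨x, hxS, rfl⟩ := h
  have hxT : x ∈ T := hCT ⟨hxS, .refl⟩
  exact ⟨x, hxT, Set.Subset.antisymm (fun y hy => ⟨hCT hy, hy.2.compOf.mono hCT⟩)
    fun y hy => ⟨hTS hy.1, hy.2.mono hTS⟩⟩

end Components

/-- If `B ∈ Γ(P,X)` then `I_X(B) ≠ ∅` and `B` is a connected component of `st(I_X(B))`. -/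
theorem stmt_5 {α : Type*} [PartialOrder α] {X B : Set α} (hB : B ∈ crosscutPoset X) :
    (astralIdx X B).Nonempty ∧ IsCompOf (starSetOf (astralIdx X B)) B := by
  obtain ⟨A, hA, hAX, hBA⟩ := hB
  have hAI : A ⊆ astralIdx X B := subset_astralIdx hAX hBA.subset
  exact ⟨hA.mono hAI, hBA.of_subset (subset_starSetOf_astralIdx X B) (starSetOf_anti hAI)⟩
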